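/- arXiv:1608.03693 — 2 statements merged into one kernel-verified Lean document; each statement's English description precedes it below -/
import Mathlib

section
/- Let X be a complete separable metric space, (P_n) Borel probability measures on X, and I : X → [0,∞] lower semicontinuous such that for every closed set C ⊆ X, limsup_{n→∞} (1/n) log P_n(C) ≤ −inf_{x∈C} I(x). Let F : X → ℝ be bounded and continuous. Then for every closed set C ⊆ X, limsup_{n→∞} (1/n) log ∫_C e^{nF(x)} P_n(dx) ≤ sup_{x∈C}[F(x) − I(x)]. -/
/-!
Cut `C` into the finitely many closed slices `C ∩ F⁻¹[kδ, (k+1)δ]`. On a slice the integrand is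
at most `e^{n(k+1)δ}`, so the integral over `C` is bounded by a finite sum of terms
`e^{n(k+1)δ} P_n(slice)`. The exponential growth rate `limsup (1/n) log` of a finite sum is the
largest rate of its terms, and the rate of each term is at most
`(k+1)δ - inf_{slice} I ≤ sup_C (F - I) + δ`. Let `δ → 0`.
-/

open Filter MeasureTheory Topology ExpGrowth
open scoped ENNReal

namespace EReal

lemma le_of_forall_pos_le_add_coe {a b : EReal} (h : ∀ δ : ℝ, 0 < δ → a ≤ b + δ) : a ≤ b := by
  refine EReal.le_of_forall_lt_iff_le.1 fun z hz => ?_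
  obtain ⟨y, hby, hyz⟩ := EReal.lt_iff_exists_real_btwn.1 hz
  calc a ≤ b + (z - y : ℝ) := h (z - y) (_root_.sub_pos.2 (EReal.coe_lt_coe_iff.1 hyz))
    _ ≤ y + (z - y : ℝ) := by gcongr
    _ = z := by rw [← EReal.coe_add, add_sub_cancel]

lemma coe_add_neg_biInf_le_biSup_sub_add {α : Type*} {s : Set α} {f : α → ℝ} {g : α → EReal}
    {a b : ℝ} (h : ∀ x ∈ s, a ≤ f x + b) :
    (a : EReal) + -(⨅ x ∈ s, g x) ≤ (⨆ x ∈ s, ((f x : EReal) - g x)) + b := by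
  refine EReal.add_le_of_forall_lt fun p hp q hq => ?_
  obtain ⟨x, hx, hgx⟩ : ∃ x ∈ s, g x < -q := by
    simpa only [iInf_lt_iff, exists_prop] using EReal.lt_neg_comm.1 hq
  calc p + q ≤ ((f x + b : ℝ) : EReal) + -g x :=
        add_le_add (hp.le.trans (by exact_mod_cast h x hx)) (EReal.lt_neg_comm.1 hgx).le
    _ = ((f x : EReal) - g x) + b := by rw [EReal.coe_add, sub_eq_add_neg, add_right_comm]
    _ ≤ (⨆ x ∈ s, ((f x : EReal) - g x)) + b := by
        gcongr
        exact le_iSup₂ (f := fun x _ => ((f x : EReal) - g x)) x hx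

end EReal

lemma limsup_inv_mul_log_eq_expGrowthSup (u : ℕ → ℝ≥0∞) :
    limsup (fun n : ℕ => (((n : ℝ)⁻¹ : ℝ) : EReal) * ENNReal.log (u n)) atTop =
      expGrowthSup u := by
  refine limsup_congr (Eventually.of_forall fun n => ?_)
  rw [EReal.coe_inv, mul_comm, EReal.coe_natCast, div_eq_mul_inv]

lemma expGrowthSup_exp_mul_le (c : ℝ) (u : ℕ → ℝ≥0∞) :
    expGrowthSup (fun n => EReal.exp (c * n) * u n) ≤ c + expGrowthSup u := by
  have hc : expGrowthSup (fun n : ℕ => EReal.exp (c * n)) = c := expGrowthSup_exp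
  calc expGrowthSup (fun n => EReal.exp (c * n) * u n)
      ≤ expGrowthSup (fun n : ℕ => EReal.exp (c * n)) + expGrowthSup u :=
        expGrowthSup_mul_le (by simp [hc]) (by simp [hc])
    _ = c + expGrowthSup u := by rw [hc]

lemma setLIntegral_le_sum_mul_measure {α ι : Type*} [MeasurableSpace α] {μ : Measure α}
    {f : α → ℝ≥0∞} {C : Set α} {s : Finset ι} {D : ι → Set α} {b : ι → ℝ≥0∞}
    (hC : C ⊆ ⋃ i ∈ s, D i) (hb : ∀ i ∈ s, ∀ x ∈ D i, f x ≤ b i) :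
    ∫⁻ x in C, f x ∂μ ≤ ∑ i ∈ s, b i * μ (D i) := by
  calc ∫⁻ x in C, f x ∂μ ≤ ∫⁻ x in ⋃ i : s, D i, f x ∂μ :=
        lintegral_mono_set (by simpa only [Set.iUnion_subtype] using hC)
    _ ≤ ∑' i : s, ∫⁻ x in D i, f x ∂μ := lintegral_iUnion_le _ _
    _ = ∑ i ∈ s, ∫⁻ x in D i, f x ∂μ := Finset.tsum_subtype s fun i => ∫⁻ x in D i, f x ∂μ
    _ ≤ ∑ i ∈ s, b i * μ (D i) := by
        gcongr with i hi
        exact (setLIntegral_mono measurable_const (hb i hi)).trans_eq (setLIntegral_const _ _)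

lemma mem_Icc_floor_div {x M δ : ℝ} (hδ : 0 < δ) (hx : |x| ≤ M) :
    ⌊x / δ⌋ ∈ Finset.Icc ⌊-M / δ⌋ ⌊M / δ⌋ := by
  rw [abs_le] at hx
  exact Finset.mem_Icc.2
    ⟨Int.floor_mono (by gcongr; exact hx.1), Int.floor_mono (by gcongr; exact hx.2)⟩

lemma mem_Icc_floor_div_mul {x δ : ℝ} (hδ : 0 < δ) :
    x ∈ Set.Icc (⌊x / δ⌋ * δ) ((⌊x / δ⌋ + 1) * δ) :=
  ⟨(le_div_iff₀ hδ).1 (Int.floor_le _), (div_le_iff₀ hδ).1 (Int.lt_floor_add_one _).le⟩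

theorem varadhan_upper_bound_general
    {X : Type*} [MetricSpace X]
    [MeasurableSpace X]
    (P : ℕ → Measure X)
    (I : X → ENNReal)
    (hupper : ∀ C : Set X, IsClosed C →
      Filter.limsup (fun n : ℕ => (((n : ℝ)⁻¹ : ℝ) : EReal) * ENNReal.log (P n C)) atTop
        ≤ -(⨅ x ∈ C, (I x : EReal)))
    (F : X → ℝ) (hF : Continuous F) (hFb : ∃ M : ℝ, ∀ x, |F x| ≤ M) :
    ∀ C : Set X, IsClosed C →
      Filter.limsup
        (fun n : ℕ => (((n : ℝ)⁻¹ : ℝ) : EReal) *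
          ENNReal.log (∫⁻ x in C, ENNReal.ofReal (Real.exp (n * F x)) ∂(P n))) atTop
        ≤ ⨆ x ∈ C, ((F x : EReal) - (I x : EReal)) := by
  obtain ⟨M, hM⟩ := hFb
  intro C hC
  simp only [limsup_inv_mul_log_eq_expGrowthSup] at hupper ⊢
  refine EReal.le_of_forall_pos_le_add_coe fun δ hδ => ?_
  let D : ℤ → Set X := fun k => C ∩ F ⁻¹' Set.Icc (k * δ) ((k + 1) * δ)
  have hcover : C ⊆ ⋃ k ∈ Finset.Icc ⌊-M / δ⌋ ⌊M / δ⌋, D k := fun x hx =>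
    Set.mem_biUnion (mem_Icc_floor_div hδ (hM x)) ⟨hx, mem_Icc_floor_div_mul hδ⟩
  have hslice : ∀ n : ℕ, ∀ k, ∀ x ∈ D k,
      ENNReal.ofReal (Real.exp (n * F x)) ≤ EReal.exp (((k + 1) * δ : ℝ) * n) := by
    intro n k x hx
    rw [← EReal.coe_natCast, ← EReal.coe_mul, EReal.exp_coe, mul_comm]
    gcongr
    exact hx.2.2
  calc expGrowthSup (fun n => ∫⁻ x in C, ENNReal.ofReal (Real.exp (n * F x)) ∂P n)
      ≤ expGrowthSup (∑ k ∈ Finset.Icc ⌊-M / δ⌋ ⌊M / δ⌋,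
          fun n => EReal.exp (((k + 1) * δ : ℝ) * n) * P n (D k)) :=
        expGrowthSup_monotone fun n => by
          simpa only [Finset.sum_apply] using
            setLIntegral_le_sum_mul_measure hcover fun k _ => hslice n k
    _ = ⨆ k ∈ Finset.Icc ⌊-M / δ⌋ ⌊M / δ⌋,
          expGrowthSup (fun n => EReal.exp (((k + 1) * δ : ℝ) * n) * P n (D k)) :=
        expGrowthSup_sum _ _
    _ ≤ (⨆ x ∈ C, ((F x : EReal) - I x)) + δ := by
        refine iSup₂_le fun k _ => ?_
        have hDk : IsClosed (D k) := hC.inter (isClosed_Icc.preimage hF)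
        calc _ ≤ (((k + 1) * δ : ℝ) : EReal) + -(⨅ x ∈ D k, (I x : EReal)) :=
              (expGrowthSup_exp_mul_le _ _).trans (add_le_add_right (hupper _ hDk) _)
          _ ≤ (⨆ x ∈ D k, ((F x : EReal) - I x)) + δ :=
              EReal.coe_add_neg_biInf_le_biSup_sub_add fun x hx => by linarith [hx.2.1]
          _ ≤ (⨆ x ∈ C, ((F x : EReal) - I x)) + δ := by
              gcongr ?_ + _
              exact biSup_mono fun x hx => hx.1

/-- Upper bound half of Varadhan's lemma: given the LDP upper bound for closed sets with
rate function `I`, for every bounded continuous `F` and every closed set `C`,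
`limsup (1/n) log ∫_C e^{nF} dP_n ≤ sup_{x ∈ C} [F x - I x]` (in the extended reals;
the supremum over the empty set is `-∞`). -/
theorem varadhan_upper_bound
    {X : Type*} [MetricSpace X] [CompleteSpace X] [TopologicalSpace.SeparableSpace X]
    [MeasurableSpace X] [BorelSpace X]
    (P : ℕ → Measure X) (hP : ∀ n, IsProbabilityMeasure (P n))
    (I : X → ENNReal) (hI : LowerSemicontinuous I)
    (hupper : ∀ C : Set X, IsClosed C →
      Filter.limsup (fun n : ℕ => (((n : ℝ)⁻¹ : ℝ) : EReal) * ENNReal.log (P n C)) atTop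
        ≤ -(⨅ x ∈ C, (I x : EReal)))
    (F : X → ℝ) (hF : Continuous F) (hFb : ∃ M : ℝ, ∀ x, |F x| ≤ M) :
    ∀ C : Set X, IsClosed C →
      Filter.limsup
        (fun n : ℕ => (((n : ℝ)⁻¹ : ℝ) : EReal) *
          ENNReal.log (∫⁻ x in C, ENNReal.ofReal (Real.exp (n * F x)) ∂(P n))) atTop
        ≤ ⨆ x ∈ C, ((F x : EReal) - (I x : EReal)) :=
  varadhan_upper_bound_general P I hupper F hF hFb
end

section
/- Let X be a complete separable metric space and let (P_n) be Borel probability measures on X satisfying a large deviation principle with rate n and rate function I : X → [0,∞] (I lower semicontinuous, closed-set upper bound and open-set lower bound hold). Let F : X → ℝ be bounded and continuous. Then lim_{n→∞} (1/n) log ∫_X e^{nF(x)} P_n(dx) exists and equals sup_{x∈X}[F(x) − I(x)]. -/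
/-!
Lower bound: if `F x - I x > c`, continuity of `F` gives an open `O ∋ x` on which `F > t` with
`t - I x ≥ c`, and `∫ e^{nF} dP_n ≥ e^{nt} P_n(O)`, so the LDP lower bound on `O` yields
`liminf (1/n) log ∫ e^{nF} dP_n ≥ c`.

Upper bound: cut the range of the bounded `F` into finitely many closed slabs
`C_j = F⁻¹[jε, jε + ε]`. Then `∫ e^{nF} dP_n ≤ k · max_j e^{n(jε+ε)} P_n(C_j)` with `k` the number
of slabs; the factor `k` disappears after `(1/n) log`, the maximum commutes with `limsup`, and the
LDP upper bound on `C_j`, together with `I ≥ F - sup (F - I) ≥ jε - sup (F - I)` there, bounds the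
`j`-th term by `sup (F - I) + ε`.
-/

open Filter MeasureTheory Topology

lemma EReal.limsup_coe_add_le {α : Type*} {f : Filter α} [f.NeBot] (b : ℝ) (v : α → EReal) :
    limsup (fun n => (b : EReal) + v n) f ≤ b + limsup v f := by
  have := EReal.limsup_add_le (u := fun _ => (b : EReal)) (v := v) (f := f)
    (by rw [limsup_const]; exact .inl (EReal.coe_ne_bot b))
    (by rw [limsup_const]; exact .inl (EReal.coe_ne_top b))
  rwa [limsup_const] at this

lemma exists_int_mem_Icc_floor_div {M ε t : ℝ} (hε : 0 < ε) (ht : |t| ≤ M) :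
    ∃ j ∈ Finset.Icc ⌊-M / ε⌋ ⌊M / ε⌋, j * ε ≤ t ∧ t ≤ j * ε + ε := by
  obtain ⟨htM, htM'⟩ := abs_le.mp ht
  refine ⟨⌊t / ε⌋, Finset.mem_Icc.mpr ⟨Int.floor_mono ?_, Int.floor_mono ?_⟩, ?_, ?_⟩
  · exact div_le_div_of_nonneg_right htM hε.le
  · exact div_le_div_of_nonneg_right htM' hε.le
  · exact (le_div_iff₀ hε).mp (Int.floor_le _)
  · have := (div_lt_iff₀ hε).mp (Int.lt_floor_add_one (t / ε))
    linarith

lemma EReal.coe_sub_le_of_sub_le_coe {a r : ℝ} {b : EReal} (h : (a : EReal) - b ≤ r) :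
    ((a - r : ℝ) : EReal) ≤ b := by
  rw [EReal.coe_sub,
    EReal.sub_le_iff_le_add (.inl (EReal.coe_ne_bot _)) (.inl (EReal.coe_ne_top _)), add_comm]
  exact (EReal.sub_le_iff_le_add (.inr (EReal.coe_ne_top _)) (.inr (EReal.coe_ne_bot _))).mp h

noncomputable def scaledLog (n : ℕ) (a : ENNReal) : EReal :=
  (((n : ℝ)⁻¹ : ℝ) : EReal) * ENNReal.log a

lemma scaledLog_mono (n : ℕ) : Monotone (scaledLog n) := fun _ _ h =>
  mul_le_mul_of_nonneg_left (ENNReal.log_monotone h) (EReal.coe_nonneg.mpr (by positivity))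

lemma scaledLog_mul (n : ℕ) (a b : ENNReal) :
    scaledLog n (a * b) = scaledLog n a + scaledLog n b := by
  rw [scaledLog, ENNReal.log_mul_add,
    EReal.left_distrib_of_nonneg_of_ne_top (EReal.coe_nonneg.mpr (by positivity))
      (EReal.coe_ne_top _)]
  rfl

lemma scaledLog_ofReal_exp {n : ℕ} (hn : n ≠ 0) (b : ℝ) :
    scaledLog n (ENNReal.ofReal (Real.exp (n * b))) = b := by
  rw [scaledLog, ENNReal.log_ofReal_of_pos (Real.exp_pos _), Real.log_exp, ← EReal.coe_mul,
    inv_mul_cancel_left₀ (Nat.cast_ne_zero.mpr hn)]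

lemma scaledLog_zero {n : ℕ} (hn : n ≠ 0) : scaledLog n 0 = ⊥ := by
  rw [scaledLog, ENNReal.log_zero, EReal.coe_mul_bot_of_pos (by positivity)]

lemma tendsto_scaledLog_natCast {k : ℕ} (hk : k ≠ 0) :
    Tendsto (fun n => scaledLog n k) atTop (𝓝 0) := by
  have hlog : ENNReal.log k = ((Real.log k : ℝ) : EReal) := by
    rw [← ENNReal.ofReal_natCast, ENNReal.log_ofReal_of_pos (by positivity)]
  simp only [scaledLog, hlog, ← EReal.coe_mul, ← EReal.coe_zero, EReal.tendsto_coe]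
  simpa using tendsto_inv_atTop_nhds_zero_nat.mul_const (Real.log k)

section Laplace

variable {X : Type*} [MeasurableSpace X]

noncomputable def scaledLogLaplace (μ : ℕ → Measure X) (F : X → ℝ) (n : ℕ) : EReal :=
  scaledLog n (∫⁻ x, ENNReal.ofReal (Real.exp (n * F x)) ∂μ n)

variable (μ : ℕ → Measure X) {F : X → ℝ}

lemma const_add_scaledLog_le_scaledLogLaplace {n : ℕ} (hn : n ≠ 0) {O : Set X}
    (hO : MeasurableSet O) {c : ℝ} (hc : ∀ x ∈ O, c ≤ F x) :
    c + scaledLog n (μ n O) ≤ scaledLogLaplace μ F n := by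
  rw [← scaledLog_ofReal_exp hn c, ← scaledLog_mul]
  refine scaledLog_mono n ?_
  calc ENNReal.ofReal (Real.exp (n * c)) * μ n O
      = ∫⁻ _ in O, ENNReal.ofReal (Real.exp (n * c)) ∂μ n := (setLIntegral_const _ _).symm
    _ ≤ ∫⁻ x in O, ENNReal.ofReal (Real.exp (n * F x)) ∂μ n :=
        setLIntegral_mono' hO fun x hx =>
          ENNReal.ofReal_le_ofReal (Real.exp_le_exp.mpr (by gcongr; exact hc x hx))
    _ ≤ _ := setLIntegral_le_lintegral _ _

lemma scaledLogLaplace_le_of_cover {n : ℕ} (hn : n ≠ 0) {ι : Type*} (s : Finset ι)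
    {C : ι → Set X} (hC : ∀ j, MeasurableSet (C j)) (b : ι → ℝ)
    (hcover : ∀ x, ∃ j ∈ s, x ∈ C j ∧ F x ≤ b j) :
    scaledLogLaplace μ F n
      ≤ scaledLog n s.card + s.sup fun j => b j + scaledLog n (μ n (C j)) := by
  set e : ι → ENNReal := fun j => ENNReal.ofReal (Real.exp (n * b j))
  have hpoint : ∀ x, ENNReal.ofReal (Real.exp (n * F x))
      ≤ ∑ j ∈ s, (C j).indicator (fun _ => e j) x := by
    intro x
    obtain ⟨j, hj, hxj, hFx⟩ := hcover x
    calc _ ≤ e j := ENNReal.ofReal_le_ofReal (Real.exp_le_exp.mpr (by gcongr))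
      _ = (C j).indicator (fun _ => e j) x := (Set.indicator_of_mem hxj (fun _ => e j)).symm
      _ ≤ _ := Finset.single_le_sum (f := fun i => (C i).indicator (fun _ => e i) x)
          (fun _ _ => zero_le) hj
  have hint : ∫⁻ x, ENNReal.ofReal (Real.exp (n * F x)) ∂μ n
      ≤ s.card * s.sup fun j => e j * μ n (C j) :=
    calc _ ≤ ∫⁻ x, ∑ j ∈ s, (C j).indicator (fun _ => e j) x ∂μ n := lintegral_mono hpoint
      _ = ∑ j ∈ s, e j * μ n (C j) := by
        rw [lintegral_finsetSum _ fun j _ => measurable_const.indicator (hC j)]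
        refine Finset.sum_congr rfl fun j _ => ?_
        rw [lintegral_indicator (hC j), setLIntegral_const]
      _ ≤ s.card • s.sup fun j => e j * μ n (C j) :=
        Finset.sum_le_card_nsmul _ _ _ fun _ hj =>
          Finset.le_sup (f := fun j => e j * μ n (C j)) hj
      _ = _ := nsmul_eq_mul _ _
  calc _ ≤ scaledLog n (s.card * s.sup fun j => e j * μ n (C j)) := scaledLog_mono n hint
    _ = _ := by
      rw [scaledLog_mul, Finset.apply_sup_eq_sup_comp (scaledLog n) (scaledLog_mono n).map_sup
        (scaledLog_zero hn)]
      refine congrArg _ (Finset.sup_congr rfl fun j _ => ?_)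
      rw [Function.comp_apply, scaledLog_mul, scaledLog_ofReal_exp hn]

end Laplace

section LargeDeviations

variable {X : Type*} [TopologicalSpace X] [MeasurableSpace X] [OpensMeasurableSpace X]
  (μ : ℕ → Measure X) (I : X → EReal) {F : X → ℝ}

lemma le_liminf_scaledLogLaplace {O : Set X} (hO : IsOpen O) {t : ℝ} (ht : ∀ x ∈ O, t ≤ F x)
    (hlower : -(⨅ x ∈ O, I x) ≤ liminf (fun n => scaledLog n (μ n O)) atTop) :
    t + -(⨅ x ∈ O, I x) ≤ liminf (scaledLogLaplace μ F) atTop :=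
  calc (t : EReal) + -(⨅ x ∈ O, I x)
      ≤ liminf (fun _ => (t : EReal)) atTop + liminf (fun n => scaledLog n (μ n O)) atTop := by
        rw [liminf_const]; gcongr
    _ ≤ liminf (fun n => t + scaledLog n (μ n O)) atTop := EReal.le_liminf_add
    _ ≤ _ := liminf_le_liminf <| (eventually_ne_atTop 0).mono fun _ hn =>
        const_add_scaledLog_le_scaledLogLaplace μ hn hO.measurableSet ht

lemma limsup_scaledLogLaplace_le_of_cover {ι : Type*} {s : Finset ι} (hs : s.Nonempty)
    {C : ι → Set X} (hC : ∀ j, IsClosed (C j)) (b : ι → ℝ)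
    (hcover : ∀ x, ∃ j ∈ s, x ∈ C j ∧ F x ≤ b j)
    (hupper : ∀ j ∈ s, limsup (fun n => scaledLog n (μ n (C j))) atTop ≤ -(⨅ x ∈ C j, I x)) :
    limsup (scaledLogLaplace μ F) atTop ≤ s.sup fun j => b j + -(⨅ x ∈ C j, I x) := by
  have hcard := (tendsto_scaledLog_natCast hs.card_ne_zero).limsup_eq
  calc limsup (scaledLogLaplace μ F) atTop
      ≤ limsup (fun n => scaledLog n s.card + s.sup fun j => b j + scaledLog n (μ n (C j))) atTop :=
        limsup_le_limsup <| (eventually_ne_atTop 0).mono fun _ hn =>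
          scaledLogLaplace_le_of_cover μ hn s (fun j => (hC j).measurableSet) b hcover
    _ ≤ limsup (fun n => scaledLog n s.card) atTop
          + limsup (fun n => s.sup fun j => b j + scaledLog n (μ n (C j))) atTop :=
        EReal.limsup_add_le (by simp [hcard]) (by simp [hcard])
    _ = s.sup fun j => limsup (fun n => b j + scaledLog n (μ n (C j))) atTop := by
        rw [hcard, zero_add, limsup_finset_sup]
    _ ≤ _ := Finset.sup_mono_fun fun j hj =>
        (EReal.limsup_coe_add_le _ _).trans (by gcongr; exact hupper j hj)

theorem iSup_sub_le_liminf_scaledLogLaplace (hF : Continuous F)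
    (hlower : ∀ O, IsOpen O → -(⨅ x ∈ O, I x) ≤ liminf (fun n => scaledLog n (μ n O)) atTop) :
    ⨆ x, (F x : EReal) - I x ≤ liminf (scaledLogLaplace μ F) atTop := by
  refine iSup_le fun x => EReal.ge_of_forall_gt_iff_ge.mp fun c hc => ?_
  have hIx : I x ≠ ⊤ := by
    intro h
    simp [h] at hc
  obtain ⟨t, hct, htF⟩ := EReal.lt_iff_exists_real_btwn.mp
    ((EReal.lt_sub_iff_add_lt (.inr (EReal.coe_ne_top c)) (.inl hIx)).mp hc)
  have hO : IsOpen (F ⁻¹' Set.Ioi t) := isOpen_Ioi.preimage hF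
  calc (c : EReal) ≤ t - I x :=
        (EReal.le_sub_iff_add_le (.inr (EReal.coe_ne_bot t)) (.inl hIx)).mpr hct.le
    _ ≤ t + -(⨅ y ∈ F ⁻¹' Set.Ioi t, I y) := by
        rw [sub_eq_add_neg]
        gcongr
        exact EReal.neg_le_neg_iff.mpr <|
          biInf_le I (show x ∈ F ⁻¹' Set.Ioi t from EReal.coe_lt_coe_iff.mp htF)
    _ ≤ _ := le_liminf_scaledLogLaplace μ I hO (fun _ hy => le_of_lt hy) (hlower _ hO)

theorem limsup_scaledLogLaplace_le_iSup_sub (hF : Continuous F) {M : ℝ} (hM : ∀ x, |F x| ≤ M)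
    (hupper : ∀ C, IsClosed C → limsup (fun n => scaledLog n (μ n C)) atTop ≤ -(⨅ x ∈ C, I x)) :
    limsup (scaledLogLaplace μ F) atTop ≤ ⨆ x, (F x : EReal) - I x := by
  refine EReal.le_of_forall_lt_iff_le.mp fun z hz => ?_
  obtain ⟨r, hSr, hrz⟩ := EReal.lt_iff_exists_real_btwn.mp hz
  obtain ⟨ε, hε, rfl⟩ : ∃ ε > 0, r + ε = z :=
    ⟨z - r, sub_pos.mpr (EReal.coe_lt_coe_iff.mp hrz), add_sub_cancel r z⟩
  have hI : ∀ x, ((F x - r : ℝ) : EReal) ≤ I x := fun x =>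
    EReal.coe_sub_le_of_sub_le_coe ((le_iSup (fun y => (F y : EReal) - I y) x).trans hSr.le)
  set C : ℤ → Set X := fun j => F ⁻¹' Set.Icc (j * ε) (j * ε + ε)
  have hC : ∀ j, IsClosed (C j) := fun j => isClosed_Icc.preimage hF
  have hs : (Finset.Icc ⌊-|M| / ε⌋ ⌊|M| / ε⌋).Nonempty := Finset.nonempty_Icc.mpr
    (Int.floor_mono (div_le_div_of_nonneg_right (neg_le_self (abs_nonneg M)) hε.le))
  have hcover : ∀ x, ∃ j ∈ Finset.Icc ⌊-|M| / ε⌋ ⌊|M| / ε⌋, x ∈ C j ∧ F x ≤ j * ε + ε := by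
    intro x
    obtain ⟨j, hj, hjx, hxj⟩ := exists_int_mem_Icc_floor_div hε ((hM x).trans (le_abs_self M))
    exact ⟨j, hj, ⟨hjx, hxj⟩, hxj⟩
  refine (limsup_scaledLogLaplace_le_of_cover μ I hs hC _ hcover fun j _ => hupper _ (hC j)).trans
    (Finset.sup_le fun j _ => ?_)
  have hinf : ((j * ε - r : ℝ) : EReal) ≤ ⨅ x ∈ C j, I x :=
    le_iInf₂ fun x hx => (EReal.coe_le_coe_iff.mpr (by linarith [hx.1])).trans (hI x)
  calc
    _ ≤ ((j * ε + ε : ℝ) : EReal) + -((j * ε - r : ℝ) : EReal) := by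
      gcongr
      exact EReal.neg_le_neg_iff.mpr hinf
    _ = ((r + ε : ℝ) : EReal) := by rw [← EReal.coe_neg, ← EReal.coe_add]; ring_nf

end LargeDeviations

theorem varadhan_lemma_general
    {X : Type*} [MetricSpace X] [MeasurableSpace X] [BorelSpace X]
    (P : ℕ → Measure X) (I : X → ENNReal)
    (hupper : ∀ C : Set X, IsClosed C →
      Filter.limsup (fun n : ℕ => (((n : ℝ)⁻¹ : ℝ) : EReal) * ENNReal.log (P n C)) atTop
        ≤ -(⨅ x ∈ C, (I x : EReal)))
    (hlower : ∀ O : Set X, IsOpen O →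
      -(⨅ x ∈ O, (I x : EReal)) ≤
        Filter.liminf (fun n : ℕ => (((n : ℝ)⁻¹ : ℝ) : EReal) * ENNReal.log (P n O)) atTop)
    (F : X → ℝ) (hF : Continuous F) (hFb : ∃ M : ℝ, ∀ x, |F x| ≤ M) :
    Filter.Tendsto
      (fun n : ℕ => (((n : ℝ)⁻¹ : ℝ) : EReal) *
        ENNReal.log (∫⁻ x, ENNReal.ofReal (Real.exp (n * F x)) ∂(P n))) atTop
      (𝓝 (⨆ x, ((F x : EReal) - (I x : EReal)))) := by
  obtain ⟨M, hM⟩ := hFb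
  exact tendsto_of_le_liminf_of_limsup_le
    (iSup_sub_le_liminf_scaledLogLaplace P (fun x => I x) hF hlower)
    (limsup_scaledLogLaplace_le_iSup_sub P (fun x => I x) hF hM hupper)

/-- Varadhan's lemma: if `(P n)` satisfies an LDP with rate `n` and rate function `I`,
then for every bounded continuous `F`,
`lim_{n→∞} (1/n) log ∫_X e^{nF} dP_n = sup_{x ∈ X} [F x - I x]`. -/
theorem varadhan_lemma
    {X : Type*} [MetricSpace X] [CompleteSpace X] [TopologicalSpace.SeparableSpace X]
    [MeasurableSpace X] [BorelSpace X]
    (P : ℕ → Measure X) (hP : ∀ n, IsProbabilityMeasure (P n))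
    (I : X → ENNReal) (hI : LowerSemicontinuous I)
    (hupper : ∀ C : Set X, IsClosed C →
      Filter.limsup (fun n : ℕ => (((n : ℝ)⁻¹ : ℝ) : EReal) * ENNReal.log (P n C)) atTop
        ≤ -(⨅ x ∈ C, (I x : EReal)))
    (hlower : ∀ O : Set X, IsOpen O →
      -(⨅ x ∈ O, (I x : EReal)) ≤
        Filter.liminf (fun n : ℕ => (((n : ℝ)⁻¹ : ℝ) : EReal) * ENNReal.log (P n O)) atTop)
    (F : X → ℝ) (hF : Continuous F) (hFb : ∃ M : ℝ, ∀ x, |F x| ≤ M) :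
    Filter.Tendsto
      (fun n : ℕ => (((n : ℝ)⁻¹ : ℝ) : EReal) *
        ENNReal.log (∫⁻ x, ENNReal.ofReal (Real.exp (n * F x)) ∂(P n))) atTop
      (𝓝 (⨆ x, ((F x : EReal) - (I x : EReal)))) :=
  varadhan_lemma_general P I hupper hlower F hF hFb
end
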